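/- arXiv:0804.4014 — 2 statements merged into one kernel-verified Lean document; each statement's English description precedes it below -/
import Mathlib

section
/- Let b₁,...,bₙ ∈ ℝ^m be an LLL-reduced basis of the lattice L, let 1 ≤ k ≤ n, and let d₁,...,d_k be arbitrary linearly independent vectors in L. Then det L(b₁,...,b_k) ≤ 2^{k(n−k)/2} · det L(d₁,...,d_k). -/
open scoped BigOperators RealInnerProductSpace

/-- The Gram–Schmidt orthogonalization `b₁*, …, bₙ*` of the vectors `b₁, …, bₙ`:
`bᵢ* = bᵢ - ∑_{j<i} μᵢⱼ bⱼ*`. -/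
noncomputable def gso {m n : ℕ} (b : Fin n → EuclideanSpace ℝ (Fin m)) :
    Fin n → EuclideanSpace ℝ (Fin m) :=
  haveI : WellFoundedLT (Fin n) := inferInstance
  InnerProductSpace.gramSchmidt ℝ b

/-- The Gram–Schmidt coefficient `μᵢⱼ = ⟨bᵢ, bⱼ*⟩ / ⟨bⱼ*, bⱼ*⟩`. -/
noncomputable def mu {m n : ℕ} (b : Fin n → EuclideanSpace ℝ (Fin m)) (i j : Fin n) : ℝ :=
  ⟪b i, gso b j⟫ / ⟪gso b j, gso b j⟫

/-- `b₁, …, bₙ` is LLL-reduced: `|μⱼᵢ| ≤ 1/2` for `i < j`, and the exchange condition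
`‖bⱼ* + μ_{j,j-1} b_{j-1}*‖² ≥ (3/4) ‖b_{j-1}*‖²` for consecutive indices `i + 1 = j`. -/
def LLLReduced {m n : ℕ} (b : Fin n → EuclideanSpace ℝ (Fin m)) : Prop :=
  (∀ i j : Fin n, i < j → |mu b j i| ≤ 1 / 2) ∧
  (∀ i j : Fin n, (i : ℕ) + 1 = (j : ℕ) →
    (3 / 4 : ℝ) * ‖gso b i‖ ^ 2 ≤ ‖gso b j + mu b j i • gso b i‖ ^ 2)

/-- Membership in the lattice generated by `b₁, …, bₙ`: an integer linear combination. -/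
def inLattice {m n : ℕ} (b : Fin n → EuclideanSpace ℝ (Fin m))
    (x : EuclideanSpace ℝ (Fin m)) : Prop :=
  ∃ c : Fin n → ℤ, x = ∑ i, (c i : ℝ) • b i

/-- The determinant of the lattice generated by `d₁, …, d_k`:
`√(det DᵀD)`, i.e. the square root of the Gram determinant. -/
noncomputable def latticeDet {m k : ℕ} (d : Fin k → EuclideanSpace ℝ (Fin m)) : ℝ :=
  Real.sqrt (Matrix.det (Matrix.of fun i j => ⟪d i, d j⟫))

/-!
Let `e` be the normalized Gram–Schmidt basis of `b`, so that `b = P e` with `P` lower triangular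
and `P i i = ‖b*ᵢ‖`. Lattice vectors are `d = C b` with `C` an integer `k × n` matrix, so the Gram
matrix of `d` is `(CP)(CP)ᵀ` and, by Cauchy–Binet, `det L(d)²` is the sum of the squared `k × k`
minors of `CP`. Choose the columns `f₁ < ⋯ < f_k` maximizing `∑ fᵢ` among those whose minor of `C`
is nonzero: triangularity of `P` kills every other term of the Cauchy–Binet expansion of the
corresponding minor of `CP`, which is therefore `det C_f · ∏ ‖b*_{fᵢ}‖` with `det C_f` a nonzero
integer. Hence `det L(d)² ≥ ∏ ‖b*_{fᵢ}‖²`. Since `i ≤ fᵢ ≤ i + n - k` and LLL reduction gives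
`‖b*ᵢ‖² ≤ 2^{j-i} ‖b*ⱼ‖²` for `i ≤ j`, this is at least `2^{-k(n-k)} ∏_{i<k} ‖b*ᵢ‖²`, which is
`2^{-k(n-k)} det L(b₁, …, b_k)²`.
-/

open Finset Matrix

namespace Fin

variable {k n : ℕ}

theorem le_val_apply_of_strictMono {f : Fin k → Fin n} (hf : StrictMono f) (i : Fin k) :
    (i : ℕ) ≤ f i := by
  have := card_le_card_of_injOn f (s := Iic i) (t := Iic (f i))
    (fun j hj => mem_Iic.mpr (hf.monotone (mem_Iic.mp hj))) hf.injective.injOn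
  simpa only [card_Iic, add_le_add_iff_right] using this

theorem val_apply_add_le_of_strictMono {f : Fin k → Fin n} (hf : StrictMono f) (i : Fin k) :
    (f i : ℕ) + k ≤ i + n := by
  have := card_le_card_of_injOn f (s := Ici i) (t := Ici (f i))
    (fun j hj => mem_Ici.mpr (hf.monotone (mem_Ici.mp hj))) hf.injective.injOn
  simp only [card_Ici] at this
  omega

end Fin

namespace Matrix

variable {R ι : Type*} [CommRing R] {k : ℕ}

theorem det_mul_eq_sum_prod_mul_det_submatrix [Fintype ι] [DecidableEq ι]
    (A : Matrix (Fin k) ι R) (B : Matrix ι (Fin k) R) :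
    (A * B).det = ∑ g : Fin k → ι, (∏ i, A i (g i)) * (B.submatrix g id).det := by
  have hrows : (A * B).det = detRowAlternating.toMultilinearMap (fun i => ∑ t, A i t • B t) := by
    congr 1
    ext i j
    simp [mul_apply, Finset.sum_apply]
  rw [hrows, MultilinearMap.map_sum]
  refine sum_congr rfl fun g _ => ?_
  rw [MultilinearMap.map_smul_univ]
  rfl

theorem sum_perm_prod_mul_det_submatrix_comp (A : Matrix (Fin k) ι R) (B : Matrix ι (Fin k) R)
    (f : Fin k → ι) :
    ∑ σ : Equiv.Perm (Fin k), (∏ i, A i (f (σ i))) * (B.submatrix (f ∘ σ) id).det =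
      (A.submatrix id f).det * (B.submatrix f id).det := by
  rw [← det_transpose (A.submatrix id f), det_apply, sum_mul]
  refine sum_congr rfl fun σ _ => ?_
  rw [show B.submatrix (f ∘ σ) id = (B.submatrix f id).submatrix σ id from rfl, det_permute,
    Units.smul_def]
  simp only [transpose_apply, submatrix_apply, id_eq, zsmul_eq_mul]
  ring

/-- The Cauchy–Binet formula. -/
theorem det_mul_eq_sum_strictMono [Fintype ι] [LinearOrder ι] (A : Matrix (Fin k) ι R)
    (B : Matrix ι (Fin k) R) :
    (A * B).det = ∑ f ∈ univ.filter (fun f : Fin k → ι => StrictMono f),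
      (A.submatrix id f).det * (B.submatrix f id).det := by
  classical
  rw [det_mul_eq_sum_prod_mul_det_submatrix, ← sum_filter_of_ne (p := Function.Injective)]
  · simp_rw [← sum_perm_prod_mul_det_submatrix_comp A B, ← sum_product']
    symm
    refine sum_bij (fun p _ => p.1 ∘ p.2) ?_ ?_ ?_ (fun _ _ => rfl)
    · rintro ⟨f, σ⟩ h
      simp only [mem_product, mem_filter, mem_univ, true_and, and_true] at h ⊢
      exact h.injective.comp σ.injective
    · rintro ⟨f, σ⟩ hf ⟨f', σ'⟩ hf' h
      simp only [mem_product, mem_filter, mem_univ, true_and, and_true] at hf hf' h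
      obtain rfl : f = f' := (hf.range_inj hf').1 <| by
        rw [← σ.surjective.range_comp f, ← σ'.surjective.range_comp f', h]
      obtain rfl : σ = σ' := Equiv.ext fun i => hf.injective (congrFun h i)
      rfl
    · intro g hg
      simp only [mem_filter, mem_univ, true_and] at hg
      refine ⟨(g ∘ Tuple.sort g, (Tuple.sort g).symm), ?_, ?_⟩
      · simp only [mem_product, mem_filter, mem_univ, true_and, and_true]
        exact (Tuple.monotone_sort g).strictMono_of_injective (hg.comp (Tuple.sort g).injective)
      · ext i
        simp
  · intro g _ hg
    by_contra hinj
    obtain ⟨i, j, hij, hne⟩ := Function.not_injective_iff.mp hinj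
    exact hg <| by rw [det_zero_of_row_eq hne (by ext; simp [hij]), mul_zero]

theorem det_mul_transpose_eq_sum_sq [Fintype ι] [LinearOrder ι] (A : Matrix (Fin k) ι R) :
    (A * Aᵀ).det = ∑ f ∈ univ.filter (fun f : Fin k → ι => StrictMono f),
      (A.submatrix id f).det ^ 2 := by
  rw [det_mul_eq_sum_strictMono]
  exact sum_congr rfl fun f _ => by rw [← transpose_submatrix, det_transpose, sq]

theorem det_submatrix_eq_zero_of_lt [LinearOrder ι] {P : Matrix ι ι R}
    (hP : P.IsLowerTriangular) {g f : Fin k → ι} (hg : Monotone g)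
    (hf : Monotone f) {i : Fin k} (hi : g i < f i) :
    (P.submatrix g f).det = 0 := by
  rw [det_apply']
  refine sum_eq_zero fun σ _ => ?_
  -- pigeonhole: `σ` cannot map `Ici i` into the smaller set `Ioi i`
  obtain ⟨t, hit, hσt⟩ : ∃ t, i ≤ t ∧ σ t ≤ i := by
    by_contra! h
    have hcard := card_le_card_of_injOn σ (fun t ht => mem_Ioi.mpr (h t (mem_Ici.mp ht)))
      σ.injective.injOn
    rw [Fin.card_Ici, Fin.card_Ioi] at hcard
    omega
  exact mul_eq_zero_of_right _ <| prod_eq_zero (mem_univ t) <|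
    hP ((hg hσt).trans_lt (hi.trans_le (hf hit)))

theorem det_submatrix_castLE_mul_transpose {n : ℕ}
    {P : Matrix (Fin n) (Fin n) R} (hP : P.IsLowerTriangular) (hkn : k ≤ n) :
    (P.submatrix (Fin.castLE hkn) id * (P.submatrix (Fin.castLE hkn) id)ᵀ).det =
      ∏ i, P (Fin.castLE hkn i) (Fin.castLE hkn i) ^ 2 := by
  rw [det_mul_transpose_eq_sum_sq, sum_eq_single (Fin.castLE hkn)]
  · rw [submatrix_submatrix, Function.comp_id, Function.id_comp,
      det_of_isLowerTriangular (P.submatrix (Fin.castLE hkn) (Fin.castLE hkn))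
        fun i j (hij : i < j) => hP (Fin.strictMono_castLE hkn hij), prod_pow]
    rfl
  · intro f hf hne
    simp only [mem_filter, mem_univ, true_and] at hf
    obtain ⟨i, hi⟩ : ∃ i, Fin.castLE hkn i < f i := by
      by_contra! h
      exact hne (funext fun i => Fin.ext <|
        ((Fin.le_val_apply_of_strictMono hf i).antisymm (h i)).symm)
    rw [submatrix_submatrix, Function.comp_id, Function.id_comp,
      det_submatrix_eq_zero_of_lt hP (Fin.strictMono_castLE hkn).monotone hf.monotone hi,
      zero_pow two_ne_zero]
  · simp [Fin.strictMono_castLE hkn]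

theorem det_mul_submatrix_eq_of_forall_sum_le {n : ℕ} (C : Matrix (Fin k) (Fin n) R)
    {P : Matrix (Fin n) (Fin n) R} (hP : P.IsLowerTriangular) {f : Fin k → Fin n}
    (hf : StrictMono f)
    (hmax : ∀ g : Fin k → Fin n, StrictMono g → (C.submatrix id g).det ≠ 0 →
      ∑ i, (g i : ℕ) ≤ ∑ i, (f i : ℕ)) :
    ((C * P).submatrix id f).det = (C.submatrix id f).det * ∏ i, P (f i) (f i) := by
  rw [show (C * P).submatrix id f = C * P.submatrix id f from rfl, det_mul_eq_sum_strictMono,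
    sum_eq_single f]
  · rw [submatrix_submatrix, Function.id_comp, Function.comp_id,
      det_of_isLowerTriangular (P.submatrix f f) fun i j (hij : i < j) => hP (hf hij)]
    rfl
  · intro g hg hgf
    simp only [mem_filter, mem_univ, true_and] at hg
    by_cases hCg : (C.submatrix id g).det = 0
    · rw [hCg, zero_mul]
    obtain ⟨i, hi⟩ : ∃ i, g i < f i := by
      by_contra! hfg
      have hsum := (sum_eq_sum_iff_of_le fun i _ => Fin.val_le_of_le (hfg i)).mp
        ((hmax g hg hCg).antisymm' (sum_le_sum fun i _ => hfg i))
      exact hgf (funext fun i => Fin.ext (hsum i (mem_univ i)).symm)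
    rw [submatrix_submatrix, Function.id_comp, Function.comp_id,
      det_submatrix_eq_zero_of_lt hP hg.monotone hf.monotone hi, mul_zero]
  · simp [hf]

theorem one_le_sq_det_map_intCast [LinearOrder R] [IsStrictOrderedRing R]
    {M : Matrix (Fin k) (Fin k) ℤ} (hM : (M.map ((↑) : ℤ → R)).det ≠ 0) :
    1 ≤ (M.map ((↑) : ℤ → R)).det ^ 2 := by
  rw [← Int.cast_det] at hM ⊢
  exact_mod_cast (one_le_sq_iff_one_le_abs _).mpr (Int.one_le_abs (by exact_mod_cast hM))

theorem exists_strictMono_prod_sq_le_det [LinearOrder R] [IsStrictOrderedRing R] {n : ℕ}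
    (C : Matrix (Fin k) (Fin n) ℤ) {P : Matrix (Fin n) (Fin n) R} (hP : P.IsLowerTriangular)
    (hdet : ((C.map (Int.cast : ℤ → R) * P) * (C.map (Int.cast : ℤ → R) * P)ᵀ).det ≠ 0) :
    ∃ f : Fin k → Fin n, StrictMono f ∧
      ∏ i, P (f i) (f i) ^ 2 ≤
        ((C.map (Int.cast : ℤ → R) * P) * (C.map (Int.cast : ℤ → R) * P)ᵀ).det := by
  classical
  set C' : Matrix (Fin k) (Fin n) R := C.map (Int.cast : ℤ → R)
  rw [det_mul_transpose_eq_sum_sq] at hdet ⊢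
  set S := univ.filter fun g : Fin k → Fin n => StrictMono g ∧ (C'.submatrix id g).det ≠ 0
  have hS : S.Nonempty := by
    by_contra hS
    refine hdet (sum_eq_zero fun f _ => ?_)
    rw [show (C' * P).submatrix id f = C' * P.submatrix id f from rfl,
      det_mul_eq_sum_strictMono, sum_eq_zero, zero_pow two_ne_zero]
    intro g hg
    simp only [mem_filter, mem_univ, true_and] at hg
    by_contra hne
    exact hS ⟨g, by simpa [S] using ⟨hg, left_ne_zero_of_mul hne⟩⟩
  obtain ⟨f, hfS, hmax⟩ := S.exists_max_image (fun g => ∑ i, (g i : ℕ)) hS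
  simp only [S, mem_filter, mem_univ, true_and] at hfS hmax
  refine ⟨f, hfS.1, ?_⟩
  calc ∏ i, P (f i) (f i) ^ 2
      ≤ (C'.submatrix id f).det ^ 2 * ∏ i, P (f i) (f i) ^ 2 :=
        le_mul_of_one_le_left (prod_nonneg fun i _ => sq_nonneg _)
          (one_le_sq_det_map_intCast hfS.2)
    _ = ((C' * P).submatrix id f).det ^ 2 := by
        rw [det_mul_submatrix_eq_of_forall_sum_le C' hP hfS.1 fun g hg hCg => hmax g ⟨hg, hCg⟩,
          mul_pow, prod_pow]
    _ ≤ _ := single_le_sum (f := fun g => ((C' * P).submatrix id g).det ^ 2)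
        (fun _ _ => sq_nonneg _) (by simpa using hfS.1)

end Matrix

section GramSchmidt

open InnerProductSpace

variable {E : Type*} [NormedAddCommGroup E] [InnerProductSpace ℝ E] {k n : ℕ}

theorem Orthonormal.sum_inner_smul_eq {ι : Type*} [Fintype ι] {e : ι → E}
    (he : Orthonormal ℝ e) {x : E} (hx : x ∈ Submodule.span ℝ (Set.range e)) :
    ∑ s, ⟪e s, x⟫ • e s = x := by
  obtain ⟨c, rfl⟩ := (Submodule.mem_span_range_iff_exists_fun ℝ).mp hx
  simp_rw [he.inner_right_fintype]

theorem Orthonormal.gram_sum_smul {ι κ : Type*} [Fintype ι] {e : ι → E} (he : Orthonormal ℝ e)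
    (A : Matrix κ ι ℝ) :
    gram ℝ (fun i => ∑ s, A i s • e s) = A * Aᵀ := by
  ext i j
  simp [gram_apply, he.inner_sum, mul_apply]

noncomputable def gramSchmidtCoeff (b : Fin n → E) : Matrix (Fin n) (Fin n) ℝ :=
  of fun i s => ⟪gramSchmidtNormed ℝ b s, b i⟫

theorem gramSchmidtCoeff_isLowerTriangular (b : Fin n → E) :
    (gramSchmidtCoeff b).IsLowerTriangular := fun i s (h : i < s) => by
  simp [gramSchmidtCoeff, gramSchmidtNormed, real_inner_smul_left,
    gramSchmidt_inv_triangular ℝ b h]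

theorem gramSchmidtCoeff_apply_self (b : Fin n → E) (i : Fin n) :
    gramSchmidtCoeff b i i = ‖gramSchmidt ℝ b i‖ := by
  have hself : ⟪gramSchmidt ℝ b i, b i⟫ = ‖gramSchmidt ℝ b i‖ ^ 2 := by
    conv_lhs => rw [gramSchmidt_def'' ℝ b i]
    rw [inner_add_right, inner_sum, real_inner_self_eq_norm_sq, add_eq_left]
    refine sum_eq_zero fun s hs => ?_
    rw [real_inner_smul_right, gramSchmidt_orthogonal ℝ b (mem_Iio.mp hs).ne', mul_zero]
  simp only [gramSchmidtCoeff, gramSchmidtNormed, of_apply, real_inner_smul_left, hself,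
    RCLike.ofReal_real_eq_id, id_eq, sq, ← mul_assoc, inv_mul_mul_self]

theorem sum_gramSchmidtCoeff_smul (b : Fin n → E) (hb : LinearIndependent ℝ b) (i : Fin n) :
    ∑ s, gramSchmidtCoeff b i s • gramSchmidtNormed ℝ b s = b i :=
  (gramSchmidtNormed_orthonormal hb).sum_inner_smul_eq <| by
    rw [span_gramSchmidtNormed_range, span_gramSchmidt]
    exact Submodule.subset_span ⟨i, rfl⟩

theorem gram_comp_eq_mul_transpose (b : Fin n → E) (hb : LinearIndependent ℝ b) {κ : Type*}
    (g : κ → Fin n) :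
    gram ℝ (b ∘ g) =
      (gramSchmidtCoeff b).submatrix g id * ((gramSchmidtCoeff b).submatrix g id)ᵀ := by
  rw [← (gramSchmidtNormed_orthonormal hb).gram_sum_smul]
  exact congrArg _ (funext fun i => (sum_gramSchmidtCoeff_smul b hb (g i)).symm)

theorem gram_sum_smul_eq_mul_transpose (b : Fin n → E) (hb : LinearIndependent ℝ b) {κ : Type*}
    (C : Matrix κ (Fin n) ℝ) :
    gram ℝ (fun i => ∑ j, C i j • b j) =
      (C * gramSchmidtCoeff b) * (C * gramSchmidtCoeff b)ᵀ := by
  rw [← (gramSchmidtNormed_orthonormal hb).gram_sum_smul]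
  refine congrArg _ (funext fun i => ?_)
  simp_rw [← sum_gramSchmidtCoeff_smul b hb, smul_sum, smul_smul, mul_apply, sum_smul]
  exact sum_comm

theorem det_gram_comp_castLE (b : Fin n → E) (hb : LinearIndependent ℝ b) (hkn : k ≤ n) :
    (gram ℝ (b ∘ Fin.castLE hkn)).det = ∏ i, ‖gramSchmidt ℝ b (Fin.castLE hkn i)‖ ^ 2 := by
  rw [gram_comp_eq_mul_transpose b hb, det_submatrix_castLE_mul_transpose
    (gramSchmidtCoeff_isLowerTriangular b)]
  simp only [gramSchmidtCoeff_apply_self]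

theorem exists_strictMono_prod_sq_le_det_gram (b : Fin n → E) (hb : LinearIndependent ℝ b)
    (C : Matrix (Fin k) (Fin n) ℤ) (hd : LinearIndependent ℝ fun i => ∑ j, (C i j : ℝ) • b j) :
    ∃ f : Fin k → Fin n, StrictMono f ∧
      ∏ i, ‖gramSchmidt ℝ b (f i)‖ ^ 2 ≤ (gram ℝ fun i => ∑ j, (C i j : ℝ) • b j).det := by
  have hgram := gram_sum_smul_eq_mul_transpose b hb (C.map (Int.cast : ℤ → ℝ))
  simp only [map_apply] at hgram
  rw [hgram]
  rw [← det_gram_ne_zero_iff_linearIndependent, hgram] at hd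
  simpa only [gramSchmidtCoeff_apply_self] using
    exists_strictMono_prod_sq_le_det C (gramSchmidtCoeff_isLowerTriangular b) hd

end GramSchmidt

namespace LLLReduced

variable {m n : ℕ} {b : Fin n → EuclideanSpace ℝ (Fin m)}

theorem norm_gso_sq_le_two_mul (hred : LLLReduced b) {i j : Fin n} (hij : (i : ℕ) + 1 = j) :
    ‖gso b i‖ ^ 2 ≤ 2 * ‖gso b j‖ ^ 2 := by
  have hlt : i < j := Fin.lt_def.mpr (by omega)
  have hexch := hred.2 i j hij
  have hmu : |mu b j i| ^ 2 ≤ 1 / 4 := by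
    nlinarith [hred.1 i j hlt, abs_nonneg (mu b j i)]
  have horth : ⟪gso b j, mu b j i • gso b i⟫ = 0 := by
    rw [real_inner_smul_right, gso, InnerProductSpace.gramSchmidt_orthogonal ℝ b hlt.ne',
      mul_zero]
  rw [norm_add_sq_real, horth, norm_smul, Real.norm_eq_abs, mul_pow] at hexch
  nlinarith [sq_nonneg ‖gso b i‖]

theorem norm_gso_sq_le_pow (hred : LLLReduced b) {i j : Fin n} (hij : i ≤ j) :
    ‖gso b i‖ ^ 2 ≤ 2 ^ ((j : ℕ) - i) * ‖gso b j‖ ^ 2 := by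
  obtain ⟨t, ht⟩ := Nat.exists_eq_add_of_le (Fin.le_def.mp hij)
  induction t generalizing i with
  | zero => simp [Fin.ext (ht.symm)]
  | succ t ih =>
    set i' : Fin n := ⟨i + 1, by omega⟩
    have hexp : (j : ℕ) - i = ((j : ℕ) - i') + 1 := by simp only [i']; omega
    calc ‖gso b i‖ ^ 2 ≤ 2 * ‖gso b i'‖ ^ 2 := hred.norm_gso_sq_le_two_mul rfl
      _ ≤ 2 * (2 ^ ((j : ℕ) - i') * ‖gso b j‖ ^ 2) := by
          gcongr
          exact ih (Fin.le_def.mpr (by simp only [i']; omega)) (by simp only [i']; omega)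
      _ = 2 ^ ((j : ℕ) - i) * ‖gso b j‖ ^ 2 := by rw [hexp, pow_succ]; ring

theorem prod_norm_gso_castLE_sq_le (hred : LLLReduced b) {k : ℕ} (hkn : k ≤ n)
    {f : Fin k → Fin n} (hf : StrictMono f) :
    ∏ i, ‖gso b (Fin.castLE hkn i)‖ ^ 2 ≤ 2 ^ (k * (n - k)) * ∏ i, ‖gso b (f i)‖ ^ 2 := by
  have hfactor : ∀ i, ‖gso b (Fin.castLE hkn i)‖ ^ 2 ≤ 2 ^ (n - k) * ‖gso b (f i)‖ ^ 2 := by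
    intro i
    have hle := Fin.le_val_apply_of_strictMono hf i
    refine (hred.norm_gso_sq_le_pow (Fin.le_def.mpr hle)).trans <|
      mul_le_mul_of_nonneg_right (pow_le_pow_right₀ one_le_two ?_) (sq_nonneg _)
    have := Fin.val_apply_add_le_of_strictMono hf i
    simp only [Fin.val_castLE]
    omega
  calc ∏ i, ‖gso b (Fin.castLE hkn i)‖ ^ 2
      ≤ ∏ i, 2 ^ (n - k) * ‖gso b (f i)‖ ^ 2 :=
        prod_le_prod (fun _ _ => sq_nonneg _) fun i _ => hfactor i
    _ = 2 ^ (k * (n - k)) * ∏ i, ‖gso b (f i)‖ ^ 2 := by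
        rw [prod_mul_distrib, prod_const, card_univ, Fintype.card_fin, ← pow_mul, mul_comm (n - k)]

end LLLReduced

theorem det_prefix_le_sublattice_det_general {m n k : ℕ} (hkn : k ≤ n)
    (b : Fin n → EuclideanSpace ℝ (Fin m))
    (hb : LinearIndependent ℝ b) (hred : LLLReduced b)
    (d : Fin k → EuclideanSpace ℝ (Fin m))
    (hd : LinearIndependent ℝ d) (hdL : ∀ i, inLattice b (d i)) :
    latticeDet (fun i : Fin k => b (Fin.castLE hkn i)) ≤
      2 ^ ((k : ℝ) * ((n : ℝ) - k) / 2) * latticeDet d := by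
  choose c hc using hdL
  obtain rfl : d = fun i => ∑ j, (c i j : ℝ) • b j := funext hc
  obtain ⟨f, hf, hle⟩ := exists_strictMono_prod_sq_le_det_gram b hb (Matrix.of c) hd
  have hsqrt : √((2 : ℝ) ^ (k * (n - k))) = 2 ^ ((k : ℝ) * ((n : ℝ) - k) / 2) := by
    rw [Real.sqrt_eq_rpow, ← Real.rpow_natCast, ← Real.rpow_mul zero_le_two]
    push_cast [Nat.cast_sub hkn]
    ring_nf
  calc latticeDet (fun i : Fin k => b (Fin.castLE hkn i))
      = √(∏ i, ‖gso b (Fin.castLE hkn i)‖ ^ 2) := congrArg _ (det_gram_comp_castLE b hb hkn)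
    _ ≤ √(2 ^ (k * (n - k)) * (gram ℝ fun i => ∑ j, (c i j : ℝ) • b j).det) :=
        Real.sqrt_le_sqrt <| (hred.prod_norm_gso_castLE_sq_le hkn hf).trans <|
          mul_le_mul_of_nonneg_left hle (by positivity)
    _ = _ := by rw [Real.sqrt_mul (by positivity), hsqrt]; rfl

theorem det_prefix_le_sublattice_det {m n k : ℕ} (hk1 : 1 ≤ k) (hkn : k ≤ n)
    (b : Fin n → EuclideanSpace ℝ (Fin m))
    (hb : LinearIndependent ℝ b) (hred : LLLReduced b)
    (d : Fin k → EuclideanSpace ℝ (Fin m))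
    (hd : LinearIndependent ℝ d) (hdL : ∀ i, inLattice b (d i)) :
    latticeDet (fun i : Fin k => b (Fin.castLE hkn i)) ≤
      2 ^ ((k : ℝ) * ((n : ℝ) - k) / 2) * latticeDet d :=
  det_prefix_le_sublattice_det_general hkn b hb hred d hd hdL
end

section
/- Let b₁,...,bₙ ∈ ℝ^m be an LLL-reduced basis of the lattice L, and for 1 ≤ k ≤ n write D_k = (det L(b₁,...,b_k))². Then D_{n−1} ≤ 2^{(n−1)/2} · (D_n)^{1 − 1/n}. -/
open scoped BigOperators RealInnerProductSpace

/-!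
Writing `Fᵢ = ‖bᵢ*‖²`, the Gram determinant of `b₁, …, b_k` is `F₁ ⋯ F_k`, because the
Gram–Schmidt change of basis is unitriangular. Size reduction and the exchange condition give
`Fᵢ ≤ 2 Fᵢ₊₁`, hence `D_{n-1} = F₁ ⋯ F_{n-1} ≤ 2^{n(n-1)/2} Fₙ^{n-1}`. Multiplying by
`D_{n-1}^{n-1}` gives `D_{n-1}^n ≤ 2^{n(n-1)/2} D_n^{n-1}`; take `n`-th roots.
-/

open Finset Matrix

namespace Matrix

variable {ι E : Type*} [NormedAddCommGroup E] [InnerProductSpace ℝ E]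

theorem gram_sum_smul [Fintype ι] (A : Matrix ι ι ℝ) (w : ι → E) :
    gram ℝ (fun j => ∑ i, A i j • w i) = Aᵀ * gram ℝ w * A := by
  ext j l
  simp only [gram_apply, sum_inner, inner_sum, real_inner_smul_left, real_inner_smul_right,
    mul_apply, transpose_apply, sum_mul]
  exact sum_congr rfl fun _ _ => sum_congr rfl fun _ _ => by ring

theorem gram_eq_diagonal [DecidableEq ι] {w : ι → E}
    (hw : Pairwise fun i j => ⟪w i, w j⟫ = 0) :
    gram ℝ w = diagonal fun i => ‖w i‖ ^ 2 := by
  ext i j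
  rcases eq_or_ne i j with rfl | hij
  · simp
  · simp [hw hij, hij]

end Matrix

namespace InnerProductSpace

section Real

variable {ι E : Type*} [NormedAddCommGroup E] [InnerProductSpace ℝ E]
  [LinearOrder ι] [LocallyFiniteOrderBot ι] [WellFoundedLT ι]

noncomputable def gramSchmidtCoeff (v : ι → E) : Matrix ι ι ℝ :=
  Matrix.of fun i j =>
    if i < j then ⟪gramSchmidt ℝ v i, v j⟫ / ‖gramSchmidt ℝ v i‖ ^ 2 else if i = j then 1 else 0

theorem sum_gramSchmidtCoeff_smul [Fintype ι] (v : ι → E) (j : ι) :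
    ∑ i, gramSchmidtCoeff v i j • gramSchmidt ℝ v i = v j := by
  have hsplit : ∀ i, gramSchmidtCoeff v i j • gramSchmidt ℝ v i =
      (if i < j then (⟪gramSchmidt ℝ v i, v j⟫ / ‖gramSchmidt ℝ v i‖ ^ 2) • gramSchmidt ℝ v i
        else 0) + if i = j then gramSchmidt ℝ v i else 0 := by
    intro i
    rcases lt_trichotomy i j with hij | rfl | hij
    · simp [gramSchmidtCoeff, hij, hij.ne]
    · simp [gramSchmidtCoeff]
    · simp [gramSchmidtCoeff, hij.not_gt, hij.ne']
  rw [sum_congr rfl fun i _ => hsplit i, sum_add_distrib, ← sum_filter, sum_ite_eq' univ j,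
    if_pos (mem_univ j), add_comm, filter_gt_eq_Iio]
  simpa using (gramSchmidt_def'' ℝ v j).symm

theorem det_gramSchmidtCoeff [Fintype ι] (v : ι → E) : (gramSchmidtCoeff v).det = 1 := by
  rw [det_of_isUpperTriangular]
  · simp [gramSchmidtCoeff]
  · intro i j (hji : j < i)
    simp [gramSchmidtCoeff, hji.ne', hji.not_gt]

theorem det_gram_eq_prod_norm_gramSchmidt_sq [Fintype ι] (v : ι → E) :
    (gram ℝ v).det = ∏ i, ‖gramSchmidt ℝ v i‖ ^ 2 := by
  calc (gram ℝ v).det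
      = (gram ℝ fun j => ∑ i, gramSchmidtCoeff v i j • gramSchmidt ℝ v i).det := by
        rw [funext (sum_gramSchmidtCoeff_smul v)]
    _ = _ := by
      rw [gram_sum_smul, gram_eq_diagonal (gramSchmidt_pairwise_orthogonal ℝ v), det_mul,
        det_mul, det_transpose, det_gramSchmidtCoeff, det_diagonal, one_mul, mul_one]

end Real

theorem gramSchmidt_castLE {𝕜 E : Type*} [RCLike 𝕜] [NormedAddCommGroup E]
    [InnerProductSpace 𝕜 E] {k n : ℕ} (h : k ≤ n) (v : Fin n → E) (i : Fin k) :
    gramSchmidt 𝕜 (fun j => v (Fin.castLE h j)) i = gramSchmidt 𝕜 v (i.castLE h) := by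
  induction i using WellFoundedLT.induction with
  | ind i ih =>
    rw [gramSchmidt_def, gramSchmidt_def 𝕜 v, Fin.sum_Iio_castLE]
    congr 1
    exact sum_congr rfl fun j hj => by rw [ih j (mem_Iio.1 hj)]

end InnerProductSpace

theorem prod_range_le_pow_mul_pow {c : ℝ} {f : ℕ → ℝ} {k : ℕ} (hc : 0 ≤ c)
    (hf : ∀ i, 0 ≤ f i) (h : ∀ i < k, f i ≤ c * f (i + 1)) :
    ∏ i ∈ range k, f i ≤ c ^ (∑ i ∈ range (k + 1), i) * f k ^ k := by
  induction k with
  | zero => simp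
  | succ k ih =>
    calc ∏ i ∈ range (k + 1), f i ≤ c ^ (∑ i ∈ range (k + 1), i) * f k ^ k * f k := by
          rw [prod_range_succ]
          gcongr
          exacts [hf k, ih fun i hi => h i (by omega)]
      _ ≤ c ^ (∑ i ∈ range (k + 1), i) * (c * f (k + 1)) ^ (k + 1) := by
          rw [mul_assoc, ← pow_succ]
          gcongr
          exacts [hf k, h k (by omega)]
      _ = _ := by rw [sum_range_succ _ (k + 1), pow_add, mul_pow]; ring

theorem le_rpow_mul_rpow_of_le_pow_mul_pow {n : ℕ} (hn : 1 ≤ n) {c P F : ℝ} (hc : 0 ≤ c)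
    (hP : 0 ≤ P) (hF : 0 ≤ F) (h : P ≤ c ^ (∑ i ∈ range n, i) * F ^ (n - 1)) :
    P ≤ c ^ (((n : ℝ) - 1) / 2) * (P * F) ^ (1 - 1 / (n : ℝ)) := by
  have hsum : ((∑ i ∈ range n, i : ℕ) : ℝ) = n * ((n : ℝ) - 1) / 2 := by
    have := congrArg (Nat.cast (R := ℝ)) (sum_range_id_mul_two n)
    push_cast [Nat.cast_sub hn] at this ⊢
    linarith
  have hroot : P ^ (1 / (n : ℝ)) ≤ c ^ (((n : ℝ) - 1) / 2) * F ^ (1 - 1 / (n : ℝ)) := by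
    have hn' : (n : ℝ) ≠ 0 := by positivity
    calc P ^ (1 / (n : ℝ)) ≤ (c ^ (∑ i ∈ range n, i) * F ^ (n - 1)) ^ (1 / (n : ℝ)) := by
          gcongr
      _ = _ := by
        rw [Real.mul_rpow (by positivity) (by positivity), ← Real.rpow_natCast,
          ← Real.rpow_natCast F, ← Real.rpow_mul hc, ← Real.rpow_mul hF, hsum,
          Nat.cast_sub hn, Nat.cast_one]
        congr 2 <;> field_simp
  calc P = P ^ (1 - 1 / (n : ℝ)) * P ^ (1 / (n : ℝ)) := by
        rw [← Real.rpow_add' hP (by norm_num)]; simp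
    _ ≤ P ^ (1 - 1 / (n : ℝ)) * (c ^ (((n : ℝ) - 1) / 2) * F ^ (1 - 1 / (n : ℝ))) := by
        gcongr
    _ = _ := by rw [Real.mul_rpow hP hF]; ring

section Lattice

variable {m n : ℕ}

theorem gso_eq_gramSchmidt (b : Fin n → EuclideanSpace ℝ (Fin m)) :
    gso b = InnerProductSpace.gramSchmidt ℝ b := rfl

theorem norm_gso_sq_le_two_mul {b : Fin n → EuclideanSpace ℝ (Fin m)} (hred : LLLReduced b)
    {i j : Fin n} (hij : (i : ℕ) + 1 = j) :
    ‖gso b i‖ ^ 2 ≤ 2 * ‖gso b j‖ ^ 2 := by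
  have hlt : i < j := Fin.lt_def.2 (by omega)
  have horth : ⟪gso b j, mu b j i • gso b i⟫ = 0 := by
    rw [real_inner_smul_right, gso_eq_gramSchmidt,
      InnerProductSpace.gramSchmidt_orthogonal ℝ b hlt.ne', mul_zero]
  have hpyth : ‖gso b j + mu b j i • gso b i‖ ^ 2 =
      ‖gso b j‖ ^ 2 + mu b j i ^ 2 * ‖gso b i‖ ^ 2 := by
    rw [norm_add_sq_real, horth, norm_smul, mul_pow, Real.norm_eq_abs, sq_abs]
    ring
  have hμ : mu b j i ^ 2 ≤ 1 / 4 := by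
    nlinarith [sq_abs (mu b j i), abs_nonneg (mu b j i), hred.1 i j hlt]
  nlinarith [hred.2 i j hij, sq_nonneg ‖gso b i‖]

theorem latticeDet_sq {k : ℕ} (d : Fin k → EuclideanSpace ℝ (Fin m)) :
    latticeDet d ^ 2 = ∏ i, ‖gso d i‖ ^ 2 := by
  have hdet : (Matrix.of fun i j => ⟪d i, d j⟫).det = ∏ i, ‖gso d i‖ ^ 2 :=
    InnerProductSpace.det_gram_eq_prod_norm_gramSchmidt_sq d
  rw [latticeDet, hdet, Real.sq_sqrt (by positivity)]

theorem latticeDet_castLE_sq {k : ℕ} [NeZero n] (b : Fin n → EuclideanSpace ℝ (Fin m))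
    (h : k ≤ n) :
    latticeDet (fun i : Fin k => b (Fin.castLE h i)) ^ 2 =
      ∏ i ∈ range k, ‖gso b (Fin.ofNat n i)‖ ^ 2 := by
  rw [latticeDet_sq, ← Fin.prod_univ_eq_prod_range]
  refine prod_congr rfl fun i _ => ?_
  rw [gso_eq_gramSchmidt, InnerProductSpace.gramSchmidt_castLE]
  congr 3
  ext
  simp [Nat.mod_eq_of_lt (i.2.trans_le h)]

end Lattice

theorem det_sq_prefix_pred_le {m n : ℕ} (hn : 1 ≤ n)
    (b : Fin n → EuclideanSpace ℝ (Fin m))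
    (hred : LLLReduced b) :
    latticeDet (fun i : Fin (n - 1) => b (Fin.castLE (by omega) i)) ^ 2 ≤
      2 ^ (((n : ℝ) - 1) / 2) * (latticeDet b ^ 2) ^ (1 - 1 / (n : ℝ)) := by
  have : NeZero n := ⟨by omega⟩
  set F : ℕ → ℝ := fun i => ‖gso b (Fin.ofNat n i)‖ ^ 2
  have hfull : latticeDet b ^ 2 = (∏ i ∈ range (n - 1), F i) * F (n - 1) := by
    rw [← prod_range_succ, Nat.sub_add_cancel hn]
    exact latticeDet_castLE_sq b le_rfl
  have hstep : ∀ i < n - 1, F i ≤ 2 * F (i + 1) := fun i hi =>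
    norm_gso_sq_le_two_mul hred <| by
      simp [Nat.mod_eq_of_lt (by omega : i < n), Nat.mod_eq_of_lt (by omega : i + 1 < n)]
  rw [latticeDet_castLE_sq, hfull]
  refine le_rpow_mul_rpow_of_le_pow_mul_pow hn zero_le_two
    (prod_nonneg fun i _ => sq_nonneg _) (sq_nonneg _) ?_
  simpa only [Nat.sub_add_cancel hn] using
    prod_range_le_pow_mul_pow zero_le_two (fun i => sq_nonneg _) hstep
end
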